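/- arXiv:2109.14667 — 3 statements merged into one kernel-verified Lean document; each statement's English description precedes it below -/
import Mathlib

section
/- Let k1, km1, k2 > 0, let I ⊆ [0, ∞) be an interval with 0 ∈ I, and let (S, E, C, P) : I → ℝ⁴ be differentiable, satisfy the mass-action system S' = -k1·S·E + km1·C, E' = -k1·S·E + (km1 + k2)·C, C' = k1·S·E - (km1 + k2)·C, P' = k2·C on I, and have nonnegative initial data S(0), E(0), C(0), P(0) ≥ 0. Then S(t) ≥ 0, E(t) ≥ 0, C(t) ≥ 0 and P(t) ≥ 0 for all t ∈ I (the nonnegative orthant is positively invariant). -/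
set_option maxHeartbeats 1000000

open Set Filter Topology

lemma min_sq_hasDerivAt (x : ℝ) : HasDerivAt (fun y : ℝ => (min y 0)^2) (2 * min x 0) x := by
  rcases lt_trichotomy x 0 with h | h | h
  · have heq : (fun y : ℝ => (min y 0)^2) =ᶠ[𝓝 x] (fun y : ℝ => y^2) := by
      filter_upwards [Iio_mem_nhds h] with y hy
      simp [min_eq_left (le_of_lt (mem_Iio.1 hy))]
    have : HasDerivAt (fun y : ℝ => y^2) (2 * x) x := by
      simpa using hasDerivAt_pow 2 x
    rw [min_eq_left h.le]
    exact this.congr_of_eventuallyEq heq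
  · subst h
    rw [min_self, mul_zero]
    rw [hasDerivAt_iff_tendsto_slope]
    have hb : Tendsto (fun z : ℝ => |z|) (𝓝[≠] (0:ℝ)) (𝓝 0) := by
      have : Tendsto (fun z : ℝ => |z|) (𝓝 (0:ℝ)) (𝓝 0) := by
        simpa using continuous_abs.tendsto (0:ℝ)
      exact this.mono_left nhdsWithin_le_nhds
    apply squeeze_zero_norm _ hb
    intro z
    simp only [slope_def_field, min_self, ne_eq]
    norm_num
    rcases eq_or_ne z 0 with rfl | hz
    · simp
    · rw [div_le_iff₀ (by positivity)]
      have h2 : (min z 0)^2 ≤ z^2 := by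
        rcases le_total z 0 with hz' | hz'
        · rw [min_eq_left hz']
        · rw [min_eq_right hz']
          simpa using sq_nonneg z
      calc (min z 0)^2 ≤ z^2 := h2
        _ = |z| * |z| := by rw [abs_mul_abs_self, sq]
  · have heq : (fun y : ℝ => (min y 0)^2) =ᶠ[𝓝 x] (fun _ : ℝ => (0:ℝ)) := by
      filter_upwards [Ioi_mem_nhds h] with y hy
      simp [min_eq_right (le_of_lt (mem_Ioi.1 hy))]
    rw [min_eq_right h.le, mul_zero]
    exact (hasDerivAt_const x 0).congr_of_eventuallyEq heq

lemma freq_slope_of_hasDerivWithinAt {f : ℝ → ℝ} {c x b : ℝ} (hxb : x < b)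
    (h : HasDerivWithinAt f c (Icc x b) x) :
    ∀ r, c < r → ∃ᶠ z in 𝓝[>] x, (z - x)⁻¹ * (f z - f x) < r := by
  intro r hr
  have h1 : Tendsto (slope f x) (𝓝[Icc x b \ {x}] x) (𝓝 c) :=
    hasDerivWithinAt_iff_tendsto_slope.1 h
  have h2 : 𝓝[Ioc x b] x ≤ 𝓝[Icc x b \ {x}] x :=
    nhdsWithin_mono _ (fun z hz => ⟨⟨hz.1.le, hz.2⟩, ne_of_gt hz.1⟩)
  have h3 : Tendsto (slope f x) (𝓝[>] x) (𝓝 c) := by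
    rw [← nhdsWithin_Ioc_eq_nhdsGT hxb]
    exact h1.mono_left h2
  have h4 : ∀ᶠ z in 𝓝[>] x, slope f x z < r := h3.eventually_lt_const hr
  refine h4.frequently.mono fun z hz => ?_
  rwa [slope_def_field, div_eq_inv_mul] at hz

lemma alg_bound (k1 km1 k2 B s e cc : ℝ) (hk1 : 0 < k1) (hkm1 : 0 < km1) (hk2 : 0 < k2)
    (hs : |s| ≤ B) (he : |e| ≤ B) :
    2*(min s 0)*(-k1*s*e + km1*cc) + 2*(min e 0)*(-k1*s*e + (km1+k2)*cc)
      + 2*(min cc 0)*(k1*s*e - (km1+k2)*cc)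
    ≤ (4*k1*B + 2*km1 + 2*(km1+k2)) * ((min s 0)^2 + (min e 0)^2 + (min cc 0)^2) := by
  obtain ⟨hs1, hs2⟩ := abs_le.1 hs
  obtain ⟨he1, he2⟩ := abs_le.1 he
  have hB : 0 ≤ B := le_trans (abs_nonneg s) hs
  set a := min s 0 with ha_def
  set b := min e 0 with hb_def
  set c := min cc 0 with hc_def
  have ha : a ≤ 0 := min_le_right _ _
  have hb : b ≤ 0 := min_le_right _ _
  have hc : c ≤ 0 := min_le_right _ _
  have hpa : 0 ≤ s - a := by simp [ha_def]
  have hqb : 0 ≤ e - b := by simp [hb_def]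
  have hrc : 0 ≤ cc - c := by simp [hc_def]
  have haa : a * s = a^2 := by
    rcases le_total s 0 with h | h
    · rw [ha_def, min_eq_left h]; ring
    · rw [ha_def, min_eq_right h]; ring
  have hbb : b * e = b^2 := by
    rcases le_total e 0 with h | h
    · rw [hb_def, min_eq_left h]; ring
    · rw [hb_def, min_eq_right h]; ring
  have hccc : c * cc = c^2 := by
    rcases le_total cc 0 with h | h
    · rw [hc_def, min_eq_left h]; ring
    · rw [hc_def, min_eq_right h]; ring
  have hpB : s - a ≤ B := by
    rcases le_total s 0 with h | h
    · rw [ha_def, min_eq_left h]; simpa using hB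
    · rw [ha_def, min_eq_right h]; simpa using hs2
  have hqB : e - b ≤ B := by
    rcases le_total e 0 with h | h
    · rw [hb_def, min_eq_left h]; simpa using hB
    · rw [hb_def, min_eq_right h]; simpa using he2
  -- a-term for s*e : 2*a*(-k1*s*e) = -2*k1*a^2*e ≤ 2*k1*B*a^2
  have h1 : 2*a*(-(k1*s*e)) ≤ 2*k1*B*a^2 := by
    have : 2*a*(-(k1*s*e)) = -(2*k1)*((a*s)*e) := by ring
    rw [this, haa]
    nlinarith [mul_nonneg (mul_nonneg hk1.le (sq_nonneg a)) (by linarith : (0:ℝ) ≤ B + e)]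
  have h2 : 2*b*(-(k1*s*e)) ≤ 2*k1*B*b^2 := by
    have : 2*b*(-(k1*s*e)) = -(2*k1)*(s*(b*e)) := by ring
    rw [this, hbb]
    nlinarith [mul_nonneg (mul_nonneg hk1.le (sq_nonneg b)) (by linarith : (0:ℝ) ≤ B + s)]
  -- c-term for s*e
  have hstep : c*(s*e) ≤ B*(b*c) + B*(a*c) := by
    have f1 : 0 ≤ (-c)*((s-a)*(e-b)) := mul_nonneg (by linarith) (mul_nonneg hpa hqb)
    have f2 : 0 ≤ (-c)*(a*b) := mul_nonneg (by linarith) (mul_nonneg_of_nonpos_of_nonpos ha hb)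
    have f3 : 0 ≤ (B-(s-a))*(b*c) := mul_nonneg (by linarith) (mul_nonneg_of_nonpos_of_nonpos hb hc)
    have f4 : 0 ≤ (B-(e-b))*(a*c) := mul_nonneg (by linarith) (mul_nonneg_of_nonpos_of_nonpos ha hc)
    nlinarith [f1, f2, f3, f4]
  have h3 : 2*c*(k1*s*e) ≤ k1*B*(b^2+c^2) + k1*B*(a^2+c^2) := by
    have hbc : b*c ≤ (b^2+c^2)/2 := by nlinarith [sq_nonneg (b - c)]
    have hac : a*c ≤ (a^2+c^2)/2 := by nlinarith [sq_nonneg (a - c)]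
    have key := mul_le_mul_of_nonneg_left hstep (by linarith : (0:ℝ) ≤ 2*k1)
    have kb := mul_le_mul_of_nonneg_left hbc (by positivity : (0:ℝ) ≤ 2*k1*B)
    have ka := mul_le_mul_of_nonneg_left hac (by positivity : (0:ℝ) ≤ 2*k1*B)
    nlinarith [key, kb, ka]
  -- cc-terms
  have h4 : 2*a*(km1*cc) ≤ km1*(a^2+c^2) := by
    have ht : a*cc = a*(cc - c) + a*c := by ring
    have h5 : a*(cc-c) ≤ 0 := mul_nonpos_of_nonpos_of_nonneg ha hrc
    nlinarith [sq_nonneg (a - c)]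
  have h5 : 2*b*((km1+k2)*cc) ≤ (km1+k2)*(b^2+c^2) := by
    have h5 : b*(cc-c) ≤ 0 := mul_nonpos_of_nonpos_of_nonneg hb hrc
    nlinarith [sq_nonneg (b - c)]
  have h6 : 2*c*(-((km1+k2)*cc)) ≤ 0 := by
    have : 2*c*(-((km1+k2)*cc)) = -(2*(km1+k2))*(c*cc) := by ring
    rw [this, hccc]
    nlinarith [sq_nonneg c]
  nlinarith [h1, h2, h3, h4, h5, h6, sq_nonneg a, sq_nonneg b, sq_nonneg c,
    mul_nonneg (mul_nonneg hk1.le hB) (sq_nonneg a),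
    mul_nonneg (mul_nonneg hk1.le hB) (sq_nonneg b),
    mul_nonneg (mul_nonneg hk1.le hB) (sq_nonneg c),
    mul_nonneg hkm1.le (sq_nonneg b), mul_nonneg hk2.le (sq_nonneg a),
    mul_nonneg hkm1.le (sq_nonneg a), mul_nonneg hk2.le (sq_nonneg c),
    mul_nonneg hkm1.le (sq_nonneg c), mul_nonneg hk2.le (sq_nonneg b)]

theorem nonneg_orthant_positively_invariant
    (k1 km1 k2 : ℝ) (hk1 : 0 < k1) (hkm1 : 0 < km1) (hk2 : 0 < k2)
    (I : Set ℝ) (hIsub : I ⊆ Set.Ici (0 : ℝ)) (hI : I.OrdConnected)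
    (h0 : (0 : ℝ) ∈ I)
    (S E C P : ℝ → ℝ)
    (hS : ∀ t ∈ I, HasDerivWithinAt S (-k1 * S t * E t + km1 * C t) I t)
    (hE : ∀ t ∈ I, HasDerivWithinAt E (-k1 * S t * E t + (km1 + k2) * C t) I t)
    (hC : ∀ t ∈ I, HasDerivWithinAt C (k1 * S t * E t - (km1 + k2) * C t) I t)
    (hP : ∀ t ∈ I, HasDerivWithinAt P (k2 * C t) I t)
    (hS0 : 0 ≤ S 0) (hE0 : 0 ≤ E 0) (hC0 : 0 ≤ C 0) (hP0 : 0 ≤ P 0) :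
    ∀ t ∈ I, 0 ≤ S t ∧ 0 ≤ E t ∧ 0 ≤ C t ∧ 0 ≤ P t := by
  have main : ∀ t ∈ I, 0 ≤ S t ∧ 0 ≤ E t ∧ 0 ≤ C t := by
    intro t1 ht1
    have ht1' : (0:ℝ) ≤ t1 := hIsub ht1
    have hIcc : Icc (0:ℝ) t1 ⊆ I := hI.out h0 ht1
    have hScont : ContinuousOn S (Icc 0 t1) :=
      fun t ht => ((hS t (hIcc ht)).continuousWithinAt).mono hIcc
    have hEcont : ContinuousOn E (Icc 0 t1) :=
      fun t ht => ((hE t (hIcc ht)).continuousWithinAt).mono hIcc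
    have hCcont : ContinuousOn C (Icc 0 t1) :=
      fun t ht => ((hC t (hIcc ht)).continuousWithinAt).mono hIcc
    obtain ⟨B1, hB1⟩ := isCompact_Icc.exists_bound_of_continuousOn hScont
    obtain ⟨B2, hB2⟩ := isCompact_Icc.exists_bound_of_continuousOn hEcont
    set B : ℝ := max B1 B2 with hB_def
    have hSB : ∀ t ∈ Icc (0:ℝ) t1, |S t| ≤ B :=
      fun t ht => le_trans (hB1 t ht) (le_max_left _ _)
    have hEB : ∀ t ∈ Icc (0:ℝ) t1, |E t| ≤ B :=
      fun t ht => le_trans (hB2 t ht) (le_max_right _ _)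
    set f : ℝ → ℝ := fun t => (min (S t) 0)^2 + (min (E t) 0)^2 + (min (C t) 0)^2 with hf_def
    set F : ℝ → ℝ := fun t =>
      2*(min (S t) 0)*(-k1 * S t * E t + km1 * C t)
      + 2*(min (E t) 0)*(-k1 * S t * E t + (km1+k2) * C t)
      + 2*(min (C t) 0)*(k1 * S t * E t - (km1+k2) * C t) with hF_def
    set K : ℝ := 4*k1*B + 2*km1 + 2*(km1+k2) with hK_def
    have hfderiv : ∀ t ∈ I, HasDerivWithinAt f (F t) I t := by
      intro t ht
      have d1 := (min_sq_hasDerivAt (S t)).comp_hasDerivWithinAt t (hS t ht)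
      have d2 := (min_sq_hasDerivAt (E t)).comp_hasDerivWithinAt t (hE t ht)
      have d3 := (min_sq_hasDerivAt (C t)).comp_hasDerivWithinAt t (hC t ht)
      exact (d1.add d2).add d3
    have hle : ∀ x ∈ Icc (0:ℝ) t1, f x ≤ gronwallBound 0 K 0 (x - 0) := by
      apply le_gronwallBound_of_liminf_deriv_right_le (f' := F)
      · exact (((hScont.inf continuousOn_const).pow 2).add
          ((hEcont.inf continuousOn_const).pow 2)).add
          ((hCcont.inf continuousOn_const).pow 2)
      · intro x hx
        have hIcc' : Icc x t1 ⊆ I := fun z hz => hIcc ⟨le_trans hx.1 hz.1, hz.2⟩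
        exact freq_slope_of_hasDerivWithinAt hx.2
          ((hfderiv x (hIcc ⟨hx.1, hx.2.le⟩)).mono hIcc')
      · simp only [hf_def, min_eq_right hS0, min_eq_right hE0, min_eq_right hC0]
        norm_num
      · intro x hx
        rw [add_zero]
        have hx' : x ∈ Icc (0:ℝ) t1 := ⟨hx.1, hx.2.le⟩
        exact alg_bound k1 km1 k2 B (S x) (E x) (C x) hk1 hkm1 hk2 (hSB x hx') (hEB x hx')
    have hfz : f t1 ≤ 0 := by
      have := hle t1 ⟨ht1', le_refl t1⟩
      rwa [gronwallBound_ε0_δ0] at this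
    have hfz' : (min (S t1) 0)^2 + (min (E t1) 0)^2 + (min (C t1) 0)^2 ≤ 0 := hfz
    have hS1 : min (S t1) 0 = 0 := by
      have : (min (S t1) 0)^2 = 0 := by
        nlinarith [sq_nonneg (min (E t1) 0), sq_nonneg (min (C t1) 0), hfz']
      exact pow_eq_zero_iff two_ne_zero |>.1 this
    have hE1 : min (E t1) 0 = 0 := by
      have : (min (E t1) 0)^2 = 0 := by
        nlinarith [sq_nonneg (min (S t1) 0), sq_nonneg (min (C t1) 0), hfz']
      exact pow_eq_zero_iff two_ne_zero |>.1 this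
    have hC1 : min (C t1) 0 = 0 := by
      have : (min (C t1) 0)^2 = 0 := by
        nlinarith [sq_nonneg (min (S t1) 0), sq_nonneg (min (E t1) 0), hfz']
      exact pow_eq_zero_iff two_ne_zero |>.1 this
    exact ⟨min_eq_right_iff.1 hS1, min_eq_right_iff.1 hE1, min_eq_right_iff.1 hC1⟩
  intro t ht
  refine ⟨(main t ht).1, (main t ht).2.1, (main t ht).2.2, ?_⟩
  have ht' : (0:ℝ) ≤ t := hIsub ht
  rcases eq_or_lt_of_le ht' with rfl | htpos
  · exact hP0
  · have hIcc : Icc (0:ℝ) t ⊆ I := hI.out h0 ht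
    have hmono : MonotoneOn P (Icc (0:ℝ) t) := by
      apply monotoneOn_of_deriv_nonneg (convex_Icc 0 t)
      · exact fun z hz => ((hP z (hIcc hz)).continuousWithinAt).mono hIcc
      · intro z hz
        rw [interior_Icc] at hz
        have hd := (hP z (hIcc ⟨hz.1.le, hz.2.le⟩)).hasDerivAt
          (mem_of_superset (Icc_mem_nhds hz.1 hz.2) hIcc)
        exact hd.differentiableAt.differentiableWithinAt
      · intro z hz
        rw [interior_Icc] at hz
        have hzI : z ∈ I := hIcc ⟨hz.1.le, hz.2.le⟩
        have hd := (hP z hzI).hasDerivAt (mem_of_superset (Icc_mem_nhds hz.1 hz.2) hIcc)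
        rw [hd.deriv]
        exact mul_nonneg hk2.le (main z hzI).2.2
    have := hmono ⟨le_refl 0, ht'⟩ ⟨ht', le_refl t⟩ ht'
    linarith
end

section
/- Let k1, km1, k2, A1, A2 > 0, set K_M := (km1 + k2)/k1, let I ⊆ [0, ∞) be an interval with 0 ∈ I, and let (S, E, C, P) : I → [0, ∞)⁴ be differentiable, satisfy the mass-action system S' = -k1·S·E + km1·C, E' = -k1·S·E + (km1 + k2)·C, C' = k1·S·E - (km1 + k2)·C, P' = k2·C on I, and satisfy S(t) ≤ A1 and E(t) ≤ A2 for all t ∈ I. If C(0) ≤ A1·A2/K_M, then C(t) ≤ A1·A2/K_M for all t ∈ I. -/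
theorem complex_bound_invariant_full
    (k1 km1 k2 A1 A2 : ℝ) (hk1 : 0 < k1) (hkm1 : 0 < km1) (hk2 : 0 < k2)
    (hA1 : 0 < A1) (hA2 : 0 < A2)
    (K_M : ℝ) (hKM : K_M = (km1 + k2) / k1)
    (I : Set ℝ) (hIsub : I ⊆ Set.Ici (0 : ℝ)) (hI : I.OrdConnected)
    (h0 : (0 : ℝ) ∈ I)
    (S E C P : ℝ → ℝ)
    (hnn : ∀ t ∈ I, 0 ≤ S t ∧ 0 ≤ E t ∧ 0 ≤ C t ∧ 0 ≤ P t)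
    (hS : ∀ t ∈ I, HasDerivWithinAt S (-k1 * S t * E t + km1 * C t) I t)
    (hE : ∀ t ∈ I, HasDerivWithinAt E (-k1 * S t * E t + (km1 + k2) * C t) I t)
    (hC : ∀ t ∈ I, HasDerivWithinAt C (k1 * S t * E t - (km1 + k2) * C t) I t)
    (hP : ∀ t ∈ I, HasDerivWithinAt P (k2 * C t) I t)
    (hSub : ∀ t ∈ I, S t ≤ A1) (hEub : ∀ t ∈ I, E t ≤ A2)
    (hC0 : C 0 ≤ A1 * A2 / K_M) :
    ∀ t ∈ I, C t ≤ A1 * A2 / K_M := by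
  intro t0 ht0
  set B : ℝ := A1 * A2 / K_M with hB
  have hKMpos : 0 < K_M := by
    rw [hKM]; positivity
  have hkey : (km1 + k2) * B = k1 * A1 * A2 := by
    rw [hB, hKM]
    field_simp
  have ht0nn : (0 : ℝ) ≤ t0 := hIsub ht0
  have hsub : Set.Icc (0 : ℝ) t0 ⊆ I := hI.out h0 ht0
  -- Gronwall on [0, t0] for g = C - B
  have key := le_gronwallBound_of_liminf_deriv_right_le
    (f := fun t => C t - B) (f' := fun t => k1 * S t * E t - (km1 + k2) * C t)
    (δ := 0) (K := -(km1 + k2)) (ε := 0) (a := 0) (b := t0)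
    (fun x hx => ((hC x (hsub hx)).continuousWithinAt.mono hsub).sub continuousWithinAt_const)
    (fun x hx r hr => by
      have hxI : x ∈ I := hsub ⟨hx.1, hx.2.le⟩
      have hIcc : Set.Icc x t0 ⊆ I := hI.out hxI ht0
      have hmem : I ∈ nhdsWithin x (Set.Ici x) :=
        Filter.mem_of_superset (Icc_mem_nhdsGE_of_mem ⟨le_refl x, hx.2⟩) hIcc
      have hd : HasDerivWithinAt (fun t => C t - B)
          (k1 * S x * E x - (km1 + k2) * C x) (Set.Ici x) x :=
        ((hC x hxI).mono_of_mem_nhdsWithin hmem).sub_const B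
      exact hd.liminf_right_slope_le hr)
    (by simpa using hC0)
    (fun x hx => by
      have hxI : x ∈ I := hsub ⟨hx.1, hx.2.le⟩
      have h1 : k1 * S x * E x ≤ k1 * A1 * A2 := by
        have hse : S x * E x ≤ A1 * A2 :=
          mul_le_mul (hSub x hxI) (hEub x hxI) (hnn x hxI).2.1 hA1.le
        have := mul_le_mul_of_nonneg_left hse hk1.le
        linarith [this]
      have : k1 * S x * E x - (km1 + k2) * C x ≤ (km1 + k2) * B - (km1 + k2) * C x := by
        rw [hkey]; linarith
      calc k1 * S x * E x - (km1 + k2) * C x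
          ≤ (km1 + k2) * B - (km1 + k2) * C x := this
        _ = -(km1 + k2) * (C x - B) + 0 := by ring)
  have h2 : C t0 - B ≤ 0 := by
    simpa [gronwallBound_ε0_δ0] using key t0 ⟨ht0nn, le_refl t0⟩
  linarith
end

section
/- Let k1, km1, k2, A1, A2 > 0 and set K_M := (km1 + k2)/k1 and A4 := min{A1, A1·A2/(K_M + A1)}. Let (S, C) : [0, ∞) → ℝ² be differentiable, satisfy the reduced system S' = -k1·A2·S + k1·S·C + km1·C, C' = k1·A2·S - k1·S·C - (km1 + k2)·C on [0, ∞), and satisfy 0 ≤ S(t), 0 ≤ C(t) ≤ A4 and S(t) + C(t) ≤ A1 for all t ≥ 0. Then (S(t), C(t)) → (0, 0) as t → ∞ (the origin is globally asymptotically attracting on the feasible region Ω1). -/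
/-!
For a weight `α` strictly between `km1 / (km1 + k2)` and `1`, the function `V = S + α C`
satisfies `V' = -(1 - α) k1 (A2 - C) S - (α (km1 + k2) - km1) C`. Since `C ≤ A4 < A2` on the
feasible region, both coefficients are bounded away from zero and `V' ≤ -l V` for some `l > 0`.
Hence `V` decays exponentially, and so do `S` and `C`, which are nonnegative and dominated by `V`.
-/

open Filter Set Topology

lemma le_mul_exp_neg_of_hasDerivWithinAt_le_neg_mul {V V' : ℝ → ℝ} {l : ℝ}
    (hV : ∀ t, 0 ≤ t → HasDerivWithinAt V (V' t) (Ici 0) t)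
    (hV' : ∀ t, 0 ≤ t → V' t ≤ -l * V t) {t : ℝ} (ht : 0 ≤ t) :
    V t ≤ V 0 * Real.exp (-(l * t)) := by
  have hexp : ∀ t, HasDerivAt (fun t => Real.exp (l * t)) (Real.exp (l * t) * l) t := fun t => by
    simpa using ((hasDerivAt_id t).const_mul l).exp
  have hweighted : ∀ t, 0 ≤ t → HasDerivWithinAt (fun t => V t * Real.exp (l * t))
      (V' t * Real.exp (l * t) + V t * (Real.exp (l * t) * l)) (Ici 0) t :=
    fun t ht => (hV t ht).mul (hexp t).hasDerivWithinAt
  have hanti : AntitoneOn (fun t => V t * Real.exp (l * t)) (Ici 0) := by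
    refine antitoneOn_of_hasDerivWithinAt_nonpos (convex_Ici 0)
      (f' := fun t => V' t * Real.exp (l * t) + V t * (Real.exp (l * t) * l))
      (fun t ht => (hweighted t ht).continuousWithinAt) (fun t ht => ?_) (fun t ht => ?_)
    · rw [interior_Ici] at ht ⊢
      exact (hweighted t (le_of_lt ht)).mono Ioi_subset_Ici_self
    · rw [interior_Ici] at ht
      nlinarith [hV' t (le_of_lt ht), Real.exp_pos (l * t)]
  have h := hanti self_mem_Ici ht ht
  simp only [mul_zero, Real.exp_zero, mul_one] at h
  rw [Real.exp_neg, ← div_eq_mul_inv, le_div_iff₀ (Real.exp_pos _)]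
  exact h

lemma tendsto_zero_of_hasDerivWithinAt_le_neg_mul {V V' : ℝ → ℝ} {l : ℝ} (hl : 0 < l)
    (hV : ∀ t, 0 ≤ t → HasDerivWithinAt V (V' t) (Ici 0) t)
    (hV' : ∀ t, 0 ≤ t → V' t ≤ -l * V t) (hVnn : ∀ t, 0 ≤ t → 0 ≤ V t) :
    Tendsto V atTop (𝓝 0) := by
  have hbound : Tendsto (fun t => V 0 * Real.exp (-(l * t))) atTop (𝓝 0) := by
    simpa using (Real.tendsto_exp_neg_atTop_nhds_zero.comp
      (tendsto_id.const_mul_atTop hl)).const_mul (V 0)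
  refine tendsto_of_tendsto_of_tendsto_of_le_of_le' tendsto_const_nhds hbound ?_ ?_ <;>
    filter_upwards [eventually_ge_atTop 0] with t ht
  exacts [hVnn t ht, le_mul_exp_neg_of_hasDerivWithinAt_le_neg_mul hV hV' ht]

lemma tendsto_prod_zero_of_add_mul_tendsto_zero {α : Type*} {l : Filter α} {f g : α → ℝ}
    {a : ℝ} (ha : 0 < a) (hf : ∀ᶠ x in l, 0 ≤ f x) (hg : ∀ᶠ x in l, 0 ≤ g x)
    (h : Tendsto (fun x => f x + a * g x) l (𝓝 0)) :
    Tendsto (fun x => (f x, g x)) l (𝓝 (0, 0)) := by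
  refine Tendsto.prodMk_nhds ?_ ?_
  · refine tendsto_of_tendsto_of_tendsto_of_le_of_le' tendsto_const_nhds h hf ?_
    filter_upwards [hg] with x hx
    nlinarith
  · refine tendsto_of_tendsto_of_tendsto_of_le_of_le' tendsto_const_nhds
      (by simpa using h.div_const a) hg ?_
    filter_upwards [hf] with x hx
    rw [le_div_iff₀ ha]
    nlinarith

lemma mul_div_add_lt {K a b : ℝ} (hK : 0 < K) (ha : 0 < a) (hb : 0 < b) :
    a * b / (K + a) < b := by
  rw [div_lt_iff₀ (by linarith)]
  nlinarith

lemma exists_michaelisMenten_lyapunov {k1 km1 k2 A2 ε : ℝ} (hk1 : 0 < k1) (hkm1 : 0 < km1)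
    (hk2 : 0 < k2) (hε : 0 < ε) :
    ∃ α > 0, ∃ l > 0, ∀ s c : ℝ, 0 ≤ s → 0 ≤ c → c ≤ A2 - ε →
      (-k1 * A2 * s + k1 * s * c + km1 * c) + α * (k1 * A2 * s - k1 * s * c - (km1 + k2) * c)
        ≤ -l * (s + α * c) := by
  -- the midpoint of `km1 / (km1 + k2)` and `1`
  set α := (2 * km1 + k2) / (2 * (km1 + k2)) with hα
  have hα0 : 0 < α := by positivity
  have hα1 : α < 1 := by rw [hα, div_lt_one (by linarith)]; linarith
  have hαk : α * (km1 + k2) = km1 + k2 / 2 := by rw [hα]; field_simp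
  set l := min ((1 - α) * k1 * ε) (k2 / (2 * α))
  have hlS : l ≤ (1 - α) * k1 * ε := min_le_left _ _
  have hlC : l * α ≤ k2 / 2 := by
    calc l * α ≤ k2 / (2 * α) * α := mul_le_mul_of_nonneg_right (min_le_right _ _) hα0.le
      _ = k2 / 2 := by field_simp
  refine ⟨α, hα0, l, lt_min (by have := sub_pos.2 hα1; positivity) (by positivity), fun s c hs hc hcε => ?_⟩
  have hSterm : (1 - α) * k1 * ε * s ≤ (1 - α) * k1 * (A2 - c) * s := by
    gcongr
    linarith
  calc (-k1 * A2 * s + k1 * s * c + km1 * c) + α * (k1 * A2 * s - k1 * s * c - (km1 + k2) * c)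
      = -((1 - α) * k1 * (A2 - c) * s) - (α * (km1 + k2) - km1) * c := by ring
    _ ≤ -((1 - α) * k1 * ε * s) - k2 / 2 * c := by rw [hαk]; linarith
    _ ≤ -l * (s + α * c) := by nlinarith

theorem origin_globally_attracting_general
    (k1 km1 k2 A1 A2 : ℝ) (hk1 : 0 < k1) (hkm1 : 0 < km1) (hk2 : 0 < k2)
    (hA1 : 0 < A1) (hA2 : 0 < A2)
    (K_M A4 : ℝ) (hKM : K_M = (km1 + k2) / k1)
    (hA4 : A4 = min A1 (A1 * A2 / (K_M + A1)))
    (S C : ℝ → ℝ)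
    (hS : ∀ t : ℝ, 0 ≤ t →
      HasDerivWithinAt S (-k1 * A2 * S t + k1 * S t * C t + km1 * C t) (Set.Ici 0) t)
    (hC : ∀ t : ℝ, 0 ≤ t →
      HasDerivWithinAt C (k1 * A2 * S t - k1 * S t * C t - (km1 + k2) * C t) (Set.Ici 0) t)
    (hSnn : ∀ t : ℝ, 0 ≤ t → 0 ≤ S t)
    (hCnn : ∀ t : ℝ, 0 ≤ t → 0 ≤ C t)
    (hCub : ∀ t : ℝ, 0 ≤ t → C t ≤ A4) :
    Filter.Tendsto (fun t : ℝ => (S t, C t)) Filter.atTop (nhds (0, 0)) := by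
  have hA4A2 : A4 < A2 := by
    rw [hA4]
    exact (min_le_right _ _).trans_lt (mul_div_add_lt (by rw [hKM]; positivity) hA1 hA2)
  obtain ⟨α, hα, l, hl, hdecay⟩ :=
    exists_michaelisMenten_lyapunov (A2 := A2) hk1 hkm1 hk2 (sub_pos.2 hA4A2)
  have hV : Tendsto (fun t => S t + α * C t) atTop (𝓝 0) :=
    tendsto_zero_of_hasDerivWithinAt_le_neg_mul hl
      (fun t ht => (hS t ht).add ((hC t ht).const_mul α))
      (fun t ht => hdecay _ _ (hSnn t ht) (hCnn t ht) (by linarith [hCub t ht]))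
      (fun t ht => by nlinarith [hSnn t ht, hCnn t ht])
  exact tendsto_prod_zero_of_add_mul_tendsto_zero hα
    (eventually_atTop.2 ⟨0, hSnn⟩) (eventually_atTop.2 ⟨0, hCnn⟩) hV

theorem origin_globally_attracting
    (k1 km1 k2 A1 A2 : ℝ) (hk1 : 0 < k1) (hkm1 : 0 < km1) (hk2 : 0 < k2)
    (hA1 : 0 < A1) (hA2 : 0 < A2)
    (K_M A4 : ℝ) (hKM : K_M = (km1 + k2) / k1)
    (hA4 : A4 = min A1 (A1 * A2 / (K_M + A1)))
    (S C : ℝ → ℝ)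
    (hS : ∀ t : ℝ, 0 ≤ t →
      HasDerivWithinAt S (-k1 * A2 * S t + k1 * S t * C t + km1 * C t) (Set.Ici 0) t)
    (hC : ∀ t : ℝ, 0 ≤ t →
      HasDerivWithinAt C (k1 * A2 * S t - k1 * S t * C t - (km1 + k2) * C t) (Set.Ici 0) t)
    (hSnn : ∀ t : ℝ, 0 ≤ t → 0 ≤ S t)
    (hCnn : ∀ t : ℝ, 0 ≤ t → 0 ≤ C t)
    (hCub : ∀ t : ℝ, 0 ≤ t → C t ≤ A4)
    (hsum : ∀ t : ℝ, 0 ≤ t → S t + C t ≤ A1) :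
    Filter.Tendsto (fun t : ℝ => (S t, C t)) Filter.atTop (nhds (0, 0)) :=
  origin_globally_attracting_general k1 km1 k2 A1 A2 hk1 hkm1 hk2 hA1 hA2 K_M A4 hKM hA4 S C hS hC
    hSnn hCnn hCub
end
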